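/- arXiv:1905.06928 — 5 statements merged into one kernel-verified Lean document; each statement's English description precedes it below -/
import Mathlib

section
/- Fix k and n₀ with k ≤ n₀. If every n₀-qubit state ρ satisfies A_k(ρ) ≤ C(n₀,k), then every n-qubit state with n ≥ n₀ satisfies A_k(ρ) ≤ C(n,k). -/
/-!
Tracing out qubit `j` of an `(n + 1)`-qubit state `ρ` leaves an `n`-qubit state, and the Pauli
expectations of `ρ_{\bar j}` are those of `ρ` on the words acting trivially on qubit `j`. A word of
weight `k` acts trivially on exactly `n + 1 - k` qubits, so `∑ j, A_k(ρ_{\bar j}) = (n + 1 - k) A_k(ρ)`.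
The bound for `n` qubits then gives `(n + 1 - k) A_k(ρ) ≤ (n + 1) C(n, k) = (n + 1 - k) C(n + 1, k)`,
and `k ≤ n` lets us cancel `n + 1 - k`.
-/

open Matrix BigOperators Finset ComplexOrder

/-- The Pauli matrices, indexed by `Fin 4`: identity, X, Y, Z. -/
noncomputable def pauli : Fin 4 → Matrix (Fin 2) (Fin 2) ℂ
  | 0 => 1
  | 1 => !![0, 1; 1, 0]
  | 2 => !![0, -Complex.I; Complex.I, 0]
  | 3 => !![1, 0; 0, -1]

/-- An `n`-qubit Pauli word: the tensor product of the Pauli matrices `pauli (w i)`,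
realized as a matrix indexed by `Fin n → Fin 2`. -/
noncomputable def pWord {n : ℕ} (w : Fin n → Fin 4) :
    Matrix (Fin n → Fin 2) (Fin n → Fin 2) ℂ :=
  Matrix.of fun x y => ∏ i, pauli (w i) (x i) (y i)

/-- The weight of a Pauli word: the number of non-identity tensor factors. -/
def wt {n : ℕ} (w : Fin n → Fin 4) : ℕ :=
  (Finset.univ.filter fun i => w i ≠ 0).card

/-- The `k`-th sector length of an `n`-qubit matrix:
the sum of squared Pauli expectation values over Pauli words of weight `k`. -/
noncomputable def sector (n k : ℕ) (ρ : Matrix (Fin n → Fin 2) (Fin n → Fin 2) ℂ) : ℝ :=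
  ∑ w ∈ Finset.univ.filter fun w : Fin n → Fin 4 => wt w = k,
    ((pWord w * ρ).trace.re) ^ 2

/-- An `n`-qubit quantum state: positive semidefinite with unit trace. -/
def IsState {n : ℕ} (ρ : Matrix (Fin n → Fin 2) (Fin n → Fin 2) ℂ) : Prop :=
  ρ.PosSemidef ∧ ρ.trace = 1

namespace Fin

lemma sum_univ_insertNth {n : ℕ} {α M : Type*} [Fintype α] [AddCommMonoid M]
    (j : Fin (n + 1)) (g : (Fin (n + 1) → α) → M) :
    ∑ x, g x = ∑ b : α, ∑ y : Fin n → α, g (j.insertNth b y) :=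
  (Fintype.sum_equiv (insertNthEquiv (fun _ => α) j) _ _ fun _ => rfl).symm.trans
    (Fintype.sum_prod_type _)

end Fin

section PartialTrace

variable {n : ℕ} {α R : Type*} [Fintype α]

/-- `ptrace j ρ` is the paper's `ρ_{\bar j}`. -/
def ptrace [AddCommMonoid R] (j : Fin (n + 1)) (ρ : Matrix (Fin (n + 1) → α) (Fin (n + 1) → α) R) :
    Matrix (Fin n → α) (Fin n → α) R :=
  ∑ b : α, ρ.submatrix (Fin.insertNth (α := fun _ => α) j b)
    (Fin.insertNth (α := fun _ => α) j b)

@[simp]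
lemma ptrace_apply [AddCommMonoid R] (j : Fin (n + 1))
    (ρ : Matrix (Fin (n + 1) → α) (Fin (n + 1) → α) R) (y y' : Fin n → α) :
    ptrace j ρ y y' = ∑ b : α, ρ (j.insertNth b y) (j.insertNth b y') := by
  simp [ptrace, Matrix.sum_apply]

lemma trace_ptrace [AddCommMonoid R] (j : Fin (n + 1))
    (ρ : Matrix (Fin (n + 1) → α) (Fin (n + 1) → α) R) :
    (ptrace j ρ).trace = ρ.trace := by
  simp only [Matrix.trace, Matrix.diag, ptrace_apply, Fin.sum_univ_insertNth j (fun x => ρ x x)]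
  exact Finset.sum_comm

lemma Matrix.PosSemidef.ptrace [Ring R] [PartialOrder R] [StarRing R] [AddLeftMono R]
    {ρ : Matrix (Fin (n + 1) → α) (Fin (n + 1) → α) R} (hρ : ρ.PosSemidef) (j : Fin (n + 1)) :
    (ptrace j ρ).PosSemidef :=
  posSemidef_sum _ fun _ _ => hρ.submatrix _

end PartialTrace

section PauliWords

variable {n : ℕ}

lemma pWord_insertNth_apply (j : Fin (n + 1)) (a : Fin 4) (w : Fin n → Fin 4) (b b' : Fin 2)
    (y y' : Fin n → Fin 2) :
    pWord (j.insertNth a w) (j.insertNth b y) (j.insertNth b' y') = pauli a b b' * pWord w y y' := by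
  simp [pWord, Fin.prod_univ_succAbove _ j]

lemma wt_insertNth_zero (j : Fin (n + 1)) (w : Fin n → Fin 4) : wt (j.insertNth 0 w) = wt w := by
  simp [wt, Finset.card_filter, Fin.sum_univ_succAbove _ j]

lemma card_filter_eq_zero_add_wt (w : Fin n → Fin 4) : #{i | w i = 0} + wt w = n := by
  simpa [wt] using Finset.card_filter_add_card_filter_not (s := univ) (fun i => w i = 0)

lemma trace_pWord_mul_ptrace (j : Fin (n + 1)) (w : Fin n → Fin 4)
    (ρ : Matrix (Fin (n + 1) → Fin 2) (Fin (n + 1) → Fin 2) ℂ) :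
    (pWord w * ptrace j ρ).trace = (pWord (j.insertNth 0 w) * ρ).trace := by
  rw [ptrace, Matrix.mul_sum, Matrix.trace_sum]
  simp only [Matrix.trace, Matrix.diag, Matrix.mul_apply, Matrix.submatrix_apply,
    Fin.sum_univ_insertNth j, pWord_insertNth_apply, show pauli 0 = 1 from rfl, Matrix.one_apply,
    ite_mul, one_mul, zero_mul]
  refine Finset.sum_congr rfl fun b _ => Finset.sum_congr rfl fun y _ => ?_
  rw [Finset.sum_comm]
  simp

end PauliWords

section SectorLength

variable {n : ℕ}

lemma IsState.ptrace {ρ : Matrix (Fin (n + 1) → Fin 2) (Fin (n + 1) → Fin 2) ℂ} (hρ : IsState ρ)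
    (j : Fin (n + 1)) : IsState (ptrace j ρ) :=
  ⟨hρ.1.ptrace j, (trace_ptrace j ρ).trans hρ.2⟩

lemma sector_ptrace (k : ℕ) (j : Fin (n + 1))
    (ρ : Matrix (Fin (n + 1) → Fin 2) (Fin (n + 1) → Fin 2) ℂ) :
    sector n k (ptrace j ρ) = ∑ W ∈ univ.filter (fun W : Fin (n + 1) → Fin 4 => wt W = k),
      if W j = 0 then ((pWord W * ρ).trace.re) ^ 2 else 0 := by
  rw [← Finset.sum_filter, Finset.filter_filter, sector]
  refine Finset.sum_nbij' (Fin.insertNth (α := fun _ => Fin 4) j 0) j.removeNth ?_ ?_ ?_ ?_ ?_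
  · intro w hw
    simp_all [wt_insertNth_zero]
  · intro W hW
    simp only [Finset.mem_filter, Finset.mem_univ, true_and] at hW ⊢
    rw [← wt_insertNth_zero j, ← hW.2, Fin.insertNth_self_removeNth]
    exact hW.1
  · intro w _
    exact Fin.removeNth_insertNth (α := fun _ => Fin 4) j 0 w
  · intro W hW
    simp only [Finset.mem_filter, Finset.mem_univ, true_and] at hW
    rw [← hW.2, Fin.insertNth_self_removeNth]
  · intro w _
    rw [trace_pWord_mul_ptrace]

lemma sum_sector_ptrace (k : ℕ) (ρ : Matrix (Fin (n + 1) → Fin 2) (Fin (n + 1) → Fin 2) ℂ) :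
    ∑ j, sector n k (ptrace j ρ) = ((n + 1 - k : ℕ) : ℝ) * sector (n + 1) k ρ := by
  simp only [sector_ptrace]
  rw [Finset.sum_comm, sector, Finset.mul_sum]
  refine Finset.sum_congr rfl fun W hW => ?_
  have hcard : #{j | W j = 0} = n + 1 - k := by
    have := card_filter_eq_zero_add_wt W
    simp only [Finset.mem_filter, Finset.mem_univ, true_and] at hW
    omega
  rw [← Finset.sum_filter, Finset.sum_const, hcard, nsmul_eq_mul]

lemma sector_le_choose_succ {k : ℕ} (hk : k ≤ n)
    (h : ∀ ρ : Matrix (Fin n → Fin 2) (Fin n → Fin 2) ℂ, IsState ρ → sector n k ρ ≤ n.choose k)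
    {ρ : Matrix (Fin (n + 1) → Fin 2) (Fin (n + 1) → Fin 2) ℂ} (hρ : IsState ρ) :
    sector (n + 1) k ρ ≤ (n + 1).choose k := by
  have hpos : (0 : ℝ) < (n + 1 - k : ℕ) := by
    exact_mod_cast Nat.sub_pos_of_lt (Nat.lt_succ_of_le hk)
  refine le_of_mul_le_mul_left ?_ hpos
  calc ((n + 1 - k : ℕ) : ℝ) * sector (n + 1) k ρ = ∑ j, sector n k (ptrace j ρ) :=
        (sum_sector_ptrace k ρ).symm
    _ ≤ ∑ _j : Fin (n + 1), (n.choose k : ℝ) :=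
        Finset.sum_le_sum fun j _ => h _ (hρ.ptrace j)
    _ = ((n + 1 - k : ℕ) : ℝ) * (n + 1).choose k := by
        rw [Finset.sum_const, Finset.card_univ, Fintype.card_fin, nsmul_eq_mul, mul_comm]
        exact_mod_cast (Nat.choose_mul_succ_eq n k).trans (mul_comm _ _)

end SectorLength

/-- If every `n₀`-qubit state satisfies `A_k ≤ C(n₀, k)`, then every
`n`-qubit state with `n ≥ n₀` satisfies `A_k ≤ C(n, k)`. -/
theorem sector_bound_induction (k n₀ : ℕ) (hk : k ≤ n₀)
    (hbase : ∀ ρ : Matrix (Fin n₀ → Fin 2) (Fin n₀ → Fin 2) ℂ,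
      IsState ρ → sector n₀ k ρ ≤ n₀.choose k) :
    ∀ n, n₀ ≤ n → ∀ ρ : Matrix (Fin n → Fin 2) (Fin n → Fin 2) ℂ,
      IsState ρ → sector n k ρ ≤ n.choose k := by
  intro n hn
  induction n, hn using Nat.le_induction with
  | base => exact hbase
  | succ n hn ih => exact fun ρ hρ => sector_le_choose_succ (hk.trans hn) ih hρ
end

section
/- Every pure 3-qubit state has two-body sector length exactly A_2 = 3. -/
open Matrix BigOperators Finset ComplexOrder

/-!
Write `Q_S = ∑ Tr(Pρ)²` over the Pauli words `P` supported in a set `S` of qubits. Since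
`∑ₐ σₐ ⊗ σₐ = 2 SWAP`, `Q_S = 2^|S| Tr(ρ_S²)`, where `ρ_S` is the reduced state on `S`. For a pure
(rank-one) state the reduced states on `S` and on its complement have the same purity, which
relates `Q_S` and `Q_{Sᶜ}`. Summing over all `S` of size `m` and counting how many such `S`
contain the support of a word turns this into an identity between the sector lengths `A_k`; for
three qubits and `m = 2` it reads `2 (3 A₀ + 2 A₁ + A₂) = 4 (3 A₀ + A₁)`, and `A₀ = (Tr ρ)² = 1`.
-/

theorem card_filter_superset_powersetCard {ι : Type*} [Fintype ι] [DecidableEq ι]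
    (T : Finset ι) {m : ℕ} (hm : m ≤ Fintype.card ι) :
    #{S ∈ powersetCard m univ | T ⊆ S} = (Fintype.card ι - #T).choose (Fintype.card ι - m) := by
  rw [← card_compl T, ← card_powersetCard]
  refine card_nbij' compl compl (fun S hS => ?_) (fun U hU => ?_) (fun S _ => compl_compl S)
    (fun U _ => compl_compl U)
  · simp only [mem_coe, mem_filter, mem_powersetCard, subset_univ, true_and] at hS ⊢
    exact ⟨compl_subset_compl.mpr hS.2, by rw [card_compl, hS.1]⟩
  · simp only [mem_coe, mem_filter, mem_powersetCard, subset_univ, true_and] at hU ⊢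
    exact ⟨by rw [card_compl, hU.2]; omega, subset_compl_comm.mp hU.1⟩

/-- The trace of an idempotent matrix is its rank, so trace `1` forces rank one. -/
theorem exists_eq_vecMulVec_of_isIdempotentElem {K m : Type*} [Field K] [CharZero K] [Fintype m]
    [DecidableEq m] {ρ : Matrix m m K} (hρ : IsIdempotentElem ρ) (htr : ρ.trace = 1) :
    ∃ u v : m → K, ρ = vecMulVec u v := by
  have he : IsIdempotentElem (toLin' ρ) := by
    rw [IsIdempotentElem, Module.End.mul_eq_comp, ← toLin'_mul, hρ.eq]
  have hrank : Module.finrank K (LinearMap.range (toLin' ρ)) = 1 := by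
    have := (LinearMap.IsIdempotentElem.isProj_range _ he).trace
    rw [trace_toLin'_eq, htr] at this
    exact_mod_cast this.symm
  obtain ⟨u, -, hu⟩ := finrank_eq_one_iff'.mp hrank
  choose c hc using fun b => hu ⟨ρ *ᵥ Pi.single b 1, LinearMap.mem_range_self (toLin' ρ) _⟩
  refine ⟨u.1, c, ext fun a b => ?_⟩
  have hcol := congrFun (congrArg Subtype.val (hc b)) a
  simp only [SetLike.val_smul, Pi.smul_apply, smul_eq_mul, mulVec_single_one] at hcol
  rw [vecMulVec_apply, mul_comm, hcol, col_apply]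

theorem pauli_zero_apply (i j : Fin 2) : pauli 0 i j = if i = j then 1 else 0 := by
  simp [pauli, one_apply]

theorem sum_pauli_mul_pauli (i j k l : Fin 2) :
    ∑ a, pauli a i j * pauli a k l = 2 * if j = k ∧ l = i then 1 else 0 := by
  fin_cases i <;> fin_cases j <;> fin_cases k <;> fin_cases l <;>
    simp [Fin.sum_univ_four, pauli] <;> norm_num

theorem pauli_isHermitian (a : Fin 4) : (pauli a).IsHermitian := by
  fin_cases a <;> ext i j <;> fin_cases i <;> fin_cases j <;> simp [pauli]

section PauliWords

variable {n : ℕ}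

theorem pWord_isHermitian (w : Fin n → Fin 4) : (pWord w).IsHermitian := by
  ext x y
  simp only [conjTranspose_apply, pWord, of_apply, star_prod, (pauli_isHermitian _).apply]

theorem star_trace_pWord_mul {ρ : Matrix (Fin n → Fin 2) (Fin n → Fin 2) ℂ}
    (hρ : ρ.IsHermitian) (w : Fin n → Fin 4) :
    star (pWord w * ρ).trace = (pWord w * ρ).trace := by
  rw [← trace_conjTranspose, conjTranspose_mul, hρ.eq, (pWord_isHermitian w).eq, trace_mul_comm]

def supportedIn (S : Finset (Fin n)) : Finset (Fin n → Fin 4) :=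
  Fintype.piFinset fun i => if i ∈ S then univ else {0}

theorem mem_supportedIn {S : Finset (Fin n)} {w : Fin n → Fin 4} :
    w ∈ supportedIn S ↔ ∀ i ∉ S, w i = 0 := by
  simp only [supportedIn, Fintype.mem_piFinset]
  refine forall_congr' fun i => ?_
  split_ifs <;> simp_all

theorem sum_pWord_mul_pWord (S : Finset (Fin n)) (x y x' y' : Fin n → Fin 2) :
    ∑ w ∈ supportedIn S, pWord w x y * pWord w x' y' =
      2 ^ #S * if y = S.piecewise x' x ∧ y' = S.piecewise x x' then 1 else 0 := by
  have factor : ∀ i, ∑ a ∈ if i ∈ S then univ else {0},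
      pauli a (x i) (y i) * pauli a (x' i) (y' i) =
        (if i ∈ S then 2 else 1) *
          if y i = S.piecewise x' x i ∧ y' i = S.piecewise x x' i then 1 else 0 := by
    intro i
    by_cases hi : i ∈ S
    · simp only [hi, if_true, sum_pauli_mul_pauli, Finset.piecewise_eq_of_mem]
    · simp only [hi, if_false, sum_singleton, pauli_zero_apply, Finset.piecewise, one_mul,
        ite_zero_mul_ite_zero]
      simp only [eq_comm]
  simp only [pWord, of_apply, ← prod_mul_distrib]
  rw [supportedIn, ← prod_univ_sum (fun i => if i ∈ S then univ else {0})
    (fun i a => pauli a (x i) (y i) * pauli a (x' i) (y' i))]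
  simp only [factor, prod_mul_distrib, prod_ite_mem, prod_const, prod_boole, univ_inter, mem_univ,
    true_imp_iff, forall_and, funext_iff]

/-- `reducedPurity S ρ` is `Tr(ρ_S²)` for the reduced matrix `ρ_S` on the qubits in `S`,
expanded so that no partial trace is needed. -/
def reducedPurity (S : Finset (Fin n)) (ρ : Matrix (Fin n → Fin 2) (Fin n → Fin 2) ℂ) : ℂ :=
  ∑ x, ∑ x', ρ (S.piecewise x' x) x * ρ (S.piecewise x x') x'

theorem sum_trace_pWord_mul_sq (S : Finset (Fin n))
    (ρ : Matrix (Fin n → Fin 2) (Fin n → Fin 2) ℂ) :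
    ∑ w ∈ supportedIn S, (pWord w * ρ).trace ^ 2 = 2 ^ #S * reducedPurity S ρ := by
  have expand : ∀ w : Fin n → Fin 4, (pWord w * ρ).trace ^ 2 =
      ∑ x, ∑ x', ∑ y, ∑ y', pWord w x y * pWord w x' y' * (ρ y x * ρ y' x') := by
    intro w
    simp only [sq, trace, Matrix.diag, mul_apply, sum_mul_sum]
    refine sum_congr rfl fun x _ => sum_congr rfl fun x' _ => ?_
    exact sum_congr rfl fun y _ => sum_congr rfl fun y' _ => by ring
  have collapse : ∀ x x', ∑ y, ∑ y', ∑ w ∈ supportedIn S,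
      pWord w x y * pWord w x' y' * (ρ y x * ρ y' x') =
        2 ^ #S * (ρ (S.piecewise x' x) x * ρ (S.piecewise x x') x') := by
    intro x x'
    simp only [← sum_mul, sum_pWord_mul_pWord, ite_and, mul_ite, mul_one, mul_zero, ite_mul,
      zero_mul, sum_ite_irrel, sum_const_zero, sum_ite_eq', mem_univ, if_true]
  calc ∑ w ∈ supportedIn S, (pWord w * ρ).trace ^ 2
      = ∑ x, ∑ x', ∑ y, ∑ y', ∑ w ∈ supportedIn S,
          pWord w x y * pWord w x' y' * (ρ y x * ρ y' x') := by
        simp only [expand]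
        rw [sum_comm]; refine sum_congr rfl fun x _ => ?_
        rw [sum_comm]; refine sum_congr rfl fun x' _ => ?_
        rw [sum_comm]; refine sum_congr rfl fun y _ => ?_
        rw [sum_comm]
    _ = 2 ^ #S * reducedPurity S ρ := by simp only [collapse, reducedPurity, mul_sum]

theorem reducedPurity_empty (ρ : Matrix (Fin n → Fin 2) (Fin n → Fin 2) ℂ) :
    reducedPurity ∅ ρ = ρ.trace ^ 2 := by
  simp only [reducedPurity, piecewise_empty, trace, Matrix.diag, sq, sum_mul_sum]

theorem reducedPurity_compl_vecMulVec (S : Finset (Fin n)) (u v : (Fin n → Fin 2) → ℂ) :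
    reducedPurity Sᶜ (vecMulVec u v) = reducedPurity S (vecMulVec u v) := by
  simp only [reducedPurity, piecewise_compl, vecMulVec_apply]
  exact sum_congr rfl fun x _ => sum_congr rfl fun x' _ => by ring

theorem sum_powersetCard_sum_supportedIn {M : Type*} [AddCommMonoid M] {m : ℕ} (hm : m ≤ n)
    (f : (Fin n → Fin 4) → M) :
    ∑ S ∈ powersetCard m univ, ∑ w ∈ supportedIn S, f w =
      ∑ k ∈ range (n + 1), (n - k).choose (n - m) • ∑ w with wt w = k, f w := by
  have count : ∀ w : Fin n → Fin 4,
      #{S ∈ powersetCard m univ | w ∈ supportedIn S} = (n - wt w).choose (n - m) := by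
    intro w
    have hsupp : ∀ S, w ∈ supportedIn S ↔ ({i | w i ≠ 0} : Finset (Fin n)) ⊆ S := by
      intro S
      simp only [mem_supportedIn, subset_iff, mem_filter, mem_univ, true_and]
      exact forall_congr' fun i => not_imp_comm
    simp only [hsupp]
    have := card_filter_superset_powersetCard ({i | w i ≠ 0} : Finset (Fin n)) (m := m)
      (by rwa [Fintype.card_fin])
    rwa [Fintype.card_fin] at this
  have wt_mem_range : ∀ w : Fin n → Fin 4, wt w ∈ range (n + 1) := fun w =>
    mem_range_succ_iff.mpr ((card_filter_le _ _).trans (card_fin n).le)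
  calc ∑ S ∈ powersetCard m univ, ∑ w ∈ supportedIn S, f w
      = ∑ w, #{S ∈ powersetCard m univ | w ∈ supportedIn S} • f w := by
        simp only [card_eq_sum_ones, sum_smul, one_smul]
        exact sum_comm' fun S w => by simp
    _ = ∑ k ∈ range (n + 1), ∑ w with wt w = k, (n - k).choose (n - m) • f w := by
        rw [← sum_fiberwise_of_maps_to fun w _ => wt_mem_range w]
        refine sum_congr rfl fun k _ => sum_congr rfl fun w hw => ?_
        rw [count, (mem_filter.mp hw).2]
    _ = _ := by simp only [smul_sum]

noncomputable def complexSector (n k : ℕ) (ρ : Matrix (Fin n → Fin 2) (Fin n → Fin 2) ℂ) : ℂ :=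
  ∑ w with wt w = k, (pWord w * ρ).trace ^ 2

theorem ofReal_sector {k : ℕ} {ρ : Matrix (Fin n → Fin 2) (Fin n → Fin 2) ℂ}
    (hρ : ρ.IsHermitian) : (sector n k ρ : ℂ) = complexSector n k ρ := by
  push_cast [sector, complexSector]
  refine sum_congr rfl fun w _ => ?_
  rw [Complex.conj_eq_iff_re.mp (star_trace_pWord_mul hρ w)]

theorem complexSector_zero (ρ : Matrix (Fin n → Fin 2) (Fin n → Fin 2) ℂ) :
    complexSector n 0 ρ = ρ.trace ^ 2 := by
  have hwords : ({w | wt w = 0} : Finset (Fin n → Fin 4)) = supportedIn ∅ := by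
    ext w
    simp [wt, mem_supportedIn, filter_eq_empty_iff]
  rw [complexSector, hwords, sum_trace_pWord_mul_sq, card_empty, pow_zero, one_mul,
    reducedPurity_empty]

theorem sum_choose_smul_complexSector {m : ℕ} (hm : m ≤ n)
    (ρ : Matrix (Fin n → Fin 2) (Fin n → Fin 2) ℂ) :
    ∑ k ∈ range (n + 1), (n - k).choose (n - m) • complexSector n k ρ =
      2 ^ m * ∑ S ∈ powersetCard m univ, reducedPurity S ρ := by
  simp only [complexSector]
  rw [← sum_powersetCard_sum_supportedIn hm, mul_sum]
  refine sum_congr rfl fun S hS => ?_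
  rw [sum_trace_pWord_mul_sq, (mem_powersetCard.mp hS).2]

theorem macWilliams_vecMulVec {m : ℕ} (hm : m ≤ n) (u v : (Fin n → Fin 2) → ℂ) :
    2 ^ (n - m) * ∑ k ∈ range (n + 1), (n - k).choose (n - m) • complexSector n k (vecMulVec u v) =
      2 ^ m * ∑ k ∈ range (n + 1), (n - k).choose m • complexSector n k (vecMulVec u v) := by
  have hcompl : ∑ S ∈ powersetCard m univ, reducedPurity S (vecMulVec u v) =
      ∑ S ∈ powersetCard (n - m) univ, reducedPurity S (vecMulVec u v) := by
    refine sum_nbij' compl compl (fun S hS => ?_) (fun S hS => ?_) (fun S _ => compl_compl S)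
      (fun S _ => compl_compl S) (fun S _ => (reducedPurity_compl_vecMulVec S u v).symm)
    · simp only [mem_powersetCard, subset_univ, true_and] at hS ⊢
      rw [card_compl, hS, Fintype.card_fin]
    · simp only [mem_powersetCard, subset_univ, true_and] at hS ⊢
      rw [card_compl, hS, Fintype.card_fin]
      omega
  have hdual := sum_choose_smul_complexSector (Nat.sub_le n m) (vecMulVec u v)
  rw [Nat.sub_sub_self hm] at hdual
  rw [sum_choose_smul_complexSector hm, hdual, hcompl]
  ring

end PauliWords

/-- Every pure 3-qubit state has two-body sector length exactly `A₂ = 3`. -/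
theorem pure_three_qubit_A2 (ρ : Matrix (Fin 3 → Fin 2) (Fin 3 → Fin 2) ℂ)
    (hρ : IsState ρ) (hpure : ρ * ρ = ρ) :
    sector 3 2 ρ = 3 := by
  obtain ⟨u, v, huv⟩ := exists_eq_vecMulVec_of_isIdempotentElem hpure hρ.2
  have hA₀ : complexSector 3 0 ρ = 1 := by rw [complexSector_zero, hρ.2, one_pow]
  have hMW : 2 * (3 * complexSector 3 0 ρ + 2 * complexSector 3 1 ρ + complexSector 3 2 ρ) =
      2 ^ 2 * (3 * complexSector 3 0 ρ + complexSector 3 1 ρ) := by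
    simpa [sum_range_succ, ← huv] using macWilliams_vecMulVec (n := 3) (m := 2) (by norm_num) u v
  have hA₂ : complexSector 3 2 ρ = 3 := by linear_combination hMW / 2 + 3 * hA₀
  exact_mod_cast (ofReal_sector hρ.1.1).trans hA₂
end

section
/- For any two-qubit density matrix ρ, A_2(ρ) ≤ 3, i.e. Σ_{a,b∈{x,y,z}} Tr((σ_a ⊗ σ_b) ρ)² ≤ 3. -/
open Matrix BigOperators Finset ComplexOrder

/-! The `4 ^ n` Pauli words are orthogonal for the Hilbert–Schmidt inner product, each of squared
norm `2 ^ n` (the completeness relation `∑_w P_w(x,y) conj P_w(x',y') = 2 ^ n δ δ`). Parseval then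
gives `∑_w Tr(P_w ρ)² ≤ 2 ^ n Tr(ρ²)`, and `Tr(ρ²) = ∑ λᵢ² ≤ (∑ λᵢ)² = 1` for a state. The identity
word alone contributes `Tr(ρ)² = 1`, so every sector of positive weight is at most `2 ^ n - 1`,
which is `3` for two qubits. -/

namespace Matrix

variable {𝕜 ι : Type*} [RCLike 𝕜] [Fintype ι] [DecidableEq ι] {A : Matrix ι ι 𝕜}

lemma IsHermitian.trace_mul_self_eq_sum_eigenvalues_sq (hA : A.IsHermitian) :
    (A * A).trace = ∑ i, (hA.eigenvalues i : 𝕜) ^ 2 := by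
  conv_lhs => rw [hA.spectral_theorem, ← map_mul, diagonal_mul_diagonal,
    Unitary.conjStarAlgAut_apply, trace_mul_cycle, Unitary.coe_star_mul_self, one_mul,
    trace_diagonal]
  simp [sq]

lemma PosSemidef.re_trace_mul_self_le_sq (hA : A.PosSemidef) :
    RCLike.re (A * A).trace ≤ RCLike.re A.trace ^ 2 := by
  rw [hA.1.trace_mul_self_eq_sum_eigenvalues_sq, hA.1.trace_eq_sum_eigenvalues]
  simp only [map_sum, ← RCLike.ofReal_pow, RCLike.ofReal_re]
  exact sum_sq_le_sq_sum_of_nonneg fun i _ => hA.eigenvalues_nonneg i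

end Matrix

lemma sum_normSq_apply_eq_re_trace_conjTranspose_mul {ι : Type*} [Fintype ι]
    (A : Matrix ι ι ℂ) :
    ∑ x, ∑ y, Complex.normSq (A x y) = (Aᴴ * A).trace.re := by
  simp only [trace, Matrix.diag, mul_apply, conjTranspose_apply, Complex.re_sum]
  rw [sum_comm]
  refine sum_congr rfl fun y _ => sum_congr rfl fun x _ => ?_
  rw [mul_comm, Complex.star_def, Complex.mul_conj, Complex.ofReal_re]

lemma pauli_completeness (x y x' y' : Fin 2) :
    ∑ a, pauli a x y * star (pauli a x' y') = if x = x' ∧ y = y' then 2 else 0 := by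
  fin_cases x <;> fin_cases y <;> fin_cases x' <;> fin_cases y' <;>
    simp [Fin.sum_univ_four, pauli, one_add_one_eq_two]

section Qubits

variable {n : ℕ}

lemma pWord_completeness (x y x' y' : Fin n → Fin 2) :
    ∑ w, pWord w x y * star (pWord w x' y') = if x = x' ∧ y = y' then 2 ^ n else 0 := by
  simp only [pWord, of_apply, star_prod, ← prod_mul_distrib]
  rw [← Fintype.prod_sum fun i a => pauli a (x i) (y i) * star (pauli a (x' i) (y' i))]
  simp only [pauli_completeness, prod_ite_zero, prod_const, card_univ, Fintype.card_fin,
    funext_iff, mem_univ, true_implies, forall_and]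

lemma sum_normSq_trace_pWord_mul (A : Matrix (Fin n → Fin 2) (Fin n → Fin 2) ℂ) :
    ∑ w, Complex.normSq (pWord w * A).trace = 2 ^ n * ∑ x, ∑ y, Complex.normSq (A x y) := by
  apply Complex.ofReal_injective
  push_cast
  simp only [← Complex.mul_conj, trace, Matrix.diag, mul_apply, map_sum, map_mul, sum_mul,
    mul_sum]
  conv_lhs =>
    rw [sum_comm]; enter [2, x']; rw [sum_comm]; enter [2, y']; rw [sum_comm]; enter [2, x]
    rw [sum_comm]
  simp only [mul_mul_mul_comm (pWord _ _ _) (A _ _), ← sum_mul, ← Complex.star_def,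
    pWord_completeness, ite_and, ite_mul, zero_mul, sum_ite_irrel, sum_const_zero,
    Fintype.sum_ite_eq']
  exact sum_comm

lemma pWord_zero : pWord (0 : Fin n → Fin 4) = 1 := by
  ext x y
  simp only [pWord, of_apply, pauli, one_apply, prod_boole, funext_iff,
    mem_univ, true_implies]

lemma wt_eq_zero_iff {w : Fin n → Fin 4} : wt w = 0 ↔ w = 0 := by
  simp [wt, funext_iff, filter_eq_empty_iff]

lemma sector_zero (A : Matrix (Fin n → Fin 2) (Fin n → Fin 2) ℂ) :
    sector n 0 A = A.trace.re ^ 2 := by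
  simp [sector, wt_eq_zero_iff, filter_eq', pWord_zero]

lemma sector_add_sector_zero_le {k : ℕ} (hk : k ≠ 0)
    (A : Matrix (Fin n → Fin 2) (Fin n → Fin 2) ℂ) :
    sector n k A + sector n 0 A ≤ ∑ w, (pWord w * A).trace.re ^ 2 := by
  rw [sector, sector, ← sum_union (disjoint_filter.2 fun _ _ h => h ▸ hk)]
  exact sum_le_sum_of_subset_of_nonneg (subset_univ _) fun _ _ _ => sq_nonneg _

variable {ρ : Matrix (Fin n → Fin 2) (Fin n → Fin 2) ℂ}

lemma IsState.re_trace_mul_self_le_one (hρ : IsState ρ) : (ρ * ρ).trace.re ≤ 1 := by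
  simpa [hρ.2] using hρ.1.re_trace_mul_self_le_sq

lemma IsState.sum_sq_re_trace_pWord_mul_le (hρ : IsState ρ) :
    ∑ w, (pWord w * ρ).trace.re ^ 2 ≤ 2 ^ n :=
  calc ∑ w, (pWord w * ρ).trace.re ^ 2
      ≤ ∑ w, Complex.normSq (pWord w * ρ).trace :=
        sum_le_sum fun w _ => (sq _).trans_le (Complex.re_sq_le_normSq _)
    _ = 2 ^ n * (ρ * ρ).trace.re := by
        rw [sum_normSq_trace_pWord_mul, sum_normSq_apply_eq_re_trace_conjTranspose_mul,
          hρ.1.1.eq]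
    _ ≤ 2 ^ n := mul_le_of_le_one_right (by positivity) hρ.re_trace_mul_self_le_one

lemma IsState.sector_le {k : ℕ} (hρ : IsState ρ) (hk : k ≠ 0) : sector n k ρ ≤ 2 ^ n - 1 := by
  have h := sector_add_sector_zero_le hk ρ
  rw [sector_zero, hρ.2, Complex.one_re, one_pow] at h
  linarith [hρ.sum_sq_re_trace_pWord_mul_le]

end Qubits

/-- Every two-qubit density matrix satisfies `A₂(ρ) ≤ 3`. -/
theorem two_qubit_A2_le_three (ρ : Matrix (Fin 2 → Fin 2) (Fin 2 → Fin 2) ℂ)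
    (hρ : IsState ρ) : sector 2 2 ρ ≤ 3 :=
  (hρ.sector_le two_ne_zero).trans_eq (by norm_num)
end

section
/- If ρ_A is an n_A-qubit state and ρ_B an n_B-qubit state, then the sector lengths of the product state satisfy A_k(ρ_A ⊗ ρ_B) = Σ_{j=0}^{k} A_j(ρ_A) · A_{k−j}(ρ_B), where A_j(σ) := 0 if j exceeds the number of qubits of σ. -/
open Matrix BigOperators Finset ComplexOrder

/-- The tensor product `ρA ⊗ ρB` of an `nA`-qubit and an `nB`-qubit matrix,
as an `(nA + nB)`-qubit matrix. -/
noncomputable def prodState {nA nB : ℕ}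
    (ρA : Matrix (Fin nA → Fin 2) (Fin nA → Fin 2) ℂ)
    (ρB : Matrix (Fin nB → Fin 2) (Fin nB → Fin 2) ℂ) :
    Matrix (Fin (nA + nB) → Fin 2) (Fin (nA + nB) → Fin 2) ℂ :=
  Matrix.of fun x y =>
    ρA (fun i => x (Fin.castAdd nB i)) (fun i => y (Fin.castAdd nB i)) *
    ρB (fun i => x (Fin.natAdd nA i)) (fun i => y (Fin.natAdd nA i))

/-- Splitting a function on `Fin (m + n)` into a pair of functions. -/
def splitEquiv (m n : ℕ) (α : Type*) : ((Fin m → α) × (Fin n → α)) ≃ (Fin (m + n) → α) :=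
  (Equiv.sumArrowEquivProdArrow (Fin m) (Fin n) α).symm.trans
    (finSumFinEquiv.arrowCongr (Equiv.refl α))

lemma splitEquiv_castAdd {m n : ℕ} {α : Type*} (a : Fin m → α) (b : Fin n → α) (i : Fin m) :
    splitEquiv m n α (a, b) (Fin.castAdd n i) = a i := by
  simp [splitEquiv, Equiv.sumArrowEquivProdArrow, Equiv.arrowCongr]

lemma splitEquiv_natAdd {m n : ℕ} {α : Type*} (a : Fin m → α) (b : Fin n → α) (i : Fin n) :
    splitEquiv m n α (a, b) (Fin.natAdd m i) = b i := by
  simp [splitEquiv, Equiv.sumArrowEquivProdArrow, Equiv.arrowCongr]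

lemma wt_split {m n : ℕ} (a : Fin m → Fin 4) (b : Fin n → Fin 4) :
    wt (splitEquiv m n (Fin 4) (a, b)) = wt a + wt b := by
  unfold wt
  rw [Finset.card_filter, Finset.card_filter, Finset.card_filter, Fin.sum_univ_add]
  congr 1
  · exact Finset.sum_congr rfl fun i _ => by simp [splitEquiv_castAdd]
  · exact Finset.sum_congr rfl fun i _ => by simp [splitEquiv_natAdd]

lemma pauli_star (p : Fin 4) (i j : Fin 2) : star (pauli p i j) = pauli p j i := by
  fin_cases p <;> fin_cases i <;> fin_cases j <;>
    simp [pauli, Matrix.one_apply]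

lemma pWord_star {n : ℕ} (w : Fin n → Fin 4) (x y : Fin n → Fin 2) :
    star (pWord w x y) = pWord w y x := by
  simp only [pWord, Matrix.of_apply, star_prod]
  exact Finset.prod_congr rfl fun i _ => pauli_star _ _ _

lemma pWord_herm {n : ℕ} (w : Fin n → Fin 4) : (pWord w)ᴴ = pWord w := by
  ext x y
  rw [Matrix.conjTranspose_apply, pWord_star]

lemma trace_im {n : ℕ} (w : Fin n → Fin 4) (ρ : Matrix (Fin n → Fin 2) (Fin n → Fin 2) ℂ)
    (h : ρ.PosSemidef) : ((pWord w * ρ).trace).im = 0 := by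
  rw [← Complex.conj_eq_iff_im]
  calc (starRingEnd ℂ) (pWord w * ρ).trace = ((pWord w * ρ)ᴴ).trace := by
        rw [Matrix.trace_conjTranspose]; rfl
    _ = (ρ * pWord w).trace := by rw [Matrix.conjTranspose_mul, pWord_herm, h.1.eq]
    _ = (pWord w * ρ).trace := Matrix.trace_mul_comm _ _

lemma trace_factor {nA nB : ℕ} (a : Fin nA → Fin 4) (b : Fin nB → Fin 4)
    (ρA : Matrix (Fin nA → Fin 2) (Fin nA → Fin 2) ℂ)
    (ρB : Matrix (Fin nB → Fin 2) (Fin nB → Fin 2) ℂ) :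
    (pWord (splitEquiv nA nB (Fin 4) (a, b)) * prodState ρA ρB).trace
      = (pWord a * ρA).trace * (pWord b * ρB).trace := by
  have split_sum : ∀ (F : (Fin (nA + nB) → Fin 2) → ℂ),
      ∑ x, F x = ∑ xA : Fin nA → Fin 2, ∑ xB : Fin nB → Fin 2,
        F (splitEquiv nA nB (Fin 2) (xA, xB)) := by
    intro F
    rw [← Equiv.sum_comp (splitEquiv nA nB (Fin 2)) F, Fintype.sum_prod_type]
  simp only [Matrix.trace, Matrix.diag_apply, Matrix.mul_apply]
  rw [split_sum]
  rw [Finset.sum_mul_sum]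
  refine Finset.sum_congr rfl fun xA _ => ?_
  refine Finset.sum_congr rfl fun xB _ => ?_
  rw [split_sum, Finset.sum_mul_sum]
  refine Finset.sum_congr rfl fun yA _ => ?_
  refine Finset.sum_congr rfl fun yB _ => ?_
  have hP : pWord (splitEquiv nA nB (Fin 4) (a, b)) (splitEquiv nA nB (Fin 2) (xA, xB))
      (splitEquiv nA nB (Fin 2) (yA, yB)) = pWord a xA yA * pWord b xB yB := by
    simp only [pWord, Matrix.of_apply]
    rw [Fin.prod_univ_add]
    congr 1
    · exact Finset.prod_congr rfl fun i _ => by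
        rw [splitEquiv_castAdd, splitEquiv_castAdd, splitEquiv_castAdd]
    · exact Finset.prod_congr rfl fun i _ => by
        rw [splitEquiv_natAdd, splitEquiv_natAdd, splitEquiv_natAdd]
  have hR : prodState ρA ρB (splitEquiv nA nB (Fin 2) (yA, yB)) (splitEquiv nA nB (Fin 2) (xA, xB))
      = ρA yA xA * ρB yB xB := by
    simp only [prodState, Matrix.of_apply]
    congr 1
    · congr 1 <;> funext i <;> rw [splitEquiv_castAdd]
    · congr 1 <;> funext i <;> rw [splitEquiv_natAdd]
  rw [hP, hR]; ring

/-- The sector lengths of a product state satisfy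
`A_k(ρA ⊗ ρB) = ∑_{j=0}^k A_j(ρA) · A_{k−j}(ρB)`
(where `A_j(σ) = 0` if `j` exceeds the number of qubits of `σ`). -/
theorem sector_of_product (nA nB k : ℕ)
    (ρA : Matrix (Fin nA → Fin 2) (Fin nA → Fin 2) ℂ) (hA : IsState ρA)
    (ρB : Matrix (Fin nB → Fin 2) (Fin nB → Fin 2) ℂ) (hB : IsState ρB) :
    sector (nA + nB) k (prodState ρA ρB)
      = ∑ j ∈ Finset.range (k + 1), sector nA j ρA * sector nB (k - j) ρB := by
  set F : (Fin nA → Fin 4) → ℝ := fun a => ((pWord a * ρA).trace.re) ^ 2 with hF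
  set G : (Fin nB → Fin 4) → ℝ := fun b => ((pWord b * ρB).trace.re) ^ 2 with hG
  have key : sector (nA + nB) k (prodState ρA ρB)
      = ∑ p ∈ Finset.univ.filter
          (fun p : (Fin nA → Fin 4) × (Fin nB → Fin 4) => wt p.1 + wt p.2 = k),
          F p.1 * G p.2 := by
    rw [sector]
    refine Finset.sum_equiv (splitEquiv nA nB (Fin 4)).symm ?_ ?_
    · intro w
      simp only [Finset.mem_filter, Finset.mem_univ, true_and]
      rw [← wt_split ((splitEquiv nA nB (Fin 4)).symm w).1 ((splitEquiv nA nB (Fin 4)).symm w).2]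
      simp
    · intro w hw
      simp only [hF, hG]
      have : w = splitEquiv nA nB (Fin 4)
          (((splitEquiv nA nB (Fin 4)).symm w).1, ((splitEquiv nA nB (Fin 4)).symm w).2) := by
        simp
      rw [show (pWord w * prodState ρA ρB).trace
            = (pWord ((splitEquiv nA nB (Fin 4)).symm w).1 * ρA).trace
              * (pWord ((splitEquiv nA nB (Fin 4)).symm w).2 * ρB).trace by
          conv_lhs => rw [this]
          exact trace_factor _ _ _ _]
      rw [Complex.mul_re, trace_im _ _ hA.1, trace_im _ _ hB.1]
      ring
  rw [key]
  rw [← Finset.sum_fiberwise_of_maps_to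
    (g := fun p : (Fin nA → Fin 4) × (Fin nB → Fin 4) => wt p.1)
    (t := Finset.range (k + 1))
    (fun p hp => by
      simp only [Finset.mem_filter, Finset.mem_univ, true_and] at hp
      simp only [Finset.mem_range]; omega)]
  refine Finset.sum_congr rfl fun j hj => ?_
  simp only [Finset.mem_range] at hj
  have hjk : j ≤ k := by omega
  rw [Finset.filter_filter]
  have hset : (Finset.univ.filter
      (fun p : (Fin nA → Fin 4) × (Fin nB → Fin 4) => wt p.1 + wt p.2 = k ∧ wt p.1 = j))
      = (Finset.univ.filter fun a : Fin nA → Fin 4 => wt a = j) ×ˢ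
        (Finset.univ.filter fun b : Fin nB → Fin 4 => wt b = k - j) := by
    ext p
    simp only [Finset.mem_filter, Finset.mem_univ, true_and, Finset.mem_product]
    omega
  rw [hset, Finset.sum_product, sector, sector, Finset.sum_mul_sum]
end

section
/- Every separable two-qubit state ρ satisfies A_2(ρ) ≤ 1; consequently, any two-qubit state with A_2 > 1 is entangled. -/
open Matrix BigOperators Finset ComplexOrder

/-- The tensor product of two single-qubit matrices as a two-qubit matrix. -/
noncomputable def kron2 (A B : Matrix (Fin 2) (Fin 2) ℂ) :
    Matrix (Fin 2 → Fin 2) (Fin 2 → Fin 2) ℂ :=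
  Matrix.of fun x y => A (x 0) (y 0) * B (x 1) (y 1)

/-- A two-qubit state is separable iff it is a convex combination of product states. -/
def Separable2 (ρ : Matrix (Fin 2 → Fin 2) (Fin 2 → Fin 2) ℂ) : Prop :=
  ∃ (m : ℕ) (p : Fin m → ℝ) (a b : Fin m → Matrix (Fin 2) (Fin 2) ℂ),
    (∀ i, 0 ≤ p i) ∧ (∑ i, p i = 1) ∧
    (∀ i, (a i).PosSemidef ∧ (a i).trace = 1) ∧
    (∀ i, (b i).PosSemidef ∧ (b i).trace = 1) ∧
    ρ = ∑ i, (p i : ℂ) • kron2 (a i) (b i)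


/-!
`A₂` is a sum of squares of real-linear functionals `ρ ↦ Re Tr(P_w ρ)`, hence convex, so on a
separable state it is at most the corresponding average over product states. Pauli expectations
factor on a product `A ⊗ B` of Hermitian matrices, giving `A₂(A ⊗ B) = A₁(A) A₁(B)`, and for a
Hermitian `2 × 2` matrix `A₁(σ) = (Tr σ)² - 4 det σ`, which is at most `1` for a qubit state since
`det σ ≥ 0`.
-/

lemma conjTranspose_pauli (k : Fin 4) : (pauli k)ᴴ = pauli k := by
  fin_cases k <;>
  · ext i j
    fin_cases i <;> fin_cases j <;> simp [pauli, conjTranspose_apply]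

lemma im_trace_pauli_mul {σ : Matrix (Fin 2) (Fin 2) ℂ} (hσ : σ.IsHermitian) (k : Fin 4) :
    (pauli k * σ).trace.im = 0 := by
  refine Complex.conj_eq_iff_im.mp ?_
  change star _ = _
  rw [← Matrix.trace_conjTranspose, conjTranspose_mul, hσ.eq, conjTranspose_pauli,
    trace_mul_comm]

noncomputable def pauliExpectation {n : ℕ} (w : Fin n → Fin 4) :
    Matrix (Fin n → Fin 2) (Fin n → Fin 2) ℂ →ₗ[ℝ] ℝ :=
  Complex.reLm ∘ₗ traceLinearMap _ ℝ ℂ ∘ₗ LinearMap.mulLeft ℝ (pWord w)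

lemma convexOn_sector (n k : ℕ) : ConvexOn ℝ Set.univ (sector n k) := by
  have hsector : sector n k =
      ∑ w ∈ univ.filter fun w : Fin n → Fin 4 => wt w = k, fun ρ => pauliExpectation w ρ ^ 2 := by
    ext ρ
    simp only [sector, Finset.sum_apply]
    rfl
  rw [hsector]
  refine Finset.sum_induction _ (ConvexOn ℝ Set.univ) (fun _ _ => ConvexOn.add)
    (convexOn_const 0 convex_univ) fun w _ => ?_
  exact (Even.convexOn_pow even_two).comp_linearMap (pauliExpectation w)

lemma trace_pWord_mul_kron2 (w : Fin 2 → Fin 4) (A B : Matrix (Fin 2) (Fin 2) ℂ) :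
    (pWord w * kron2 A B).trace = (pauli (w 0) * A).trace * (pauli (w 1) * B).trace := by
  have sum_pair (f : (Fin 2 → Fin 2) → ℂ) : ∑ x, f x = ∑ a : Fin 2, ∑ b : Fin 2, f ![a, b] := by
    rw [← (finTwoArrowEquiv (Fin 2)).symm.sum_comp, Fintype.sum_prod_type]
    rfl
  simp only [trace, Matrix.diag, mul_apply, pWord, kron2, of_apply, Fin.prod_univ_two, sum_pair,
    Fin.sum_univ_two, cons_val_zero, cons_val_one]
  ring

lemma sum_wt_eq_two (F : Fin 4 → Fin 4 → ℝ) :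
    ∑ w ∈ univ.filter fun w : Fin 2 → Fin 4 => wt w = 2, F (w 0) (w 1) =
      ∑ k ∈ univ.filter (· ≠ 0), ∑ l ∈ univ.filter (· ≠ 0), F k l := by
  have hwt : ∀ w : Fin 2 → Fin 4, wt w = 2 ↔ w 0 ≠ 0 ∧ w 1 ≠ 0 := by decide
  rw [Finset.sum_filter, Finset.sum_filter, ← (finTwoArrowEquiv (Fin 4)).symm.sum_comp,
    Fintype.sum_prod_type]
  refine Finset.sum_congr rfl fun k _ => ?_
  by_cases hk : k = 0 <;> simp [hk, hwt, Finset.sum_filter]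

/-- The paper's `A₁`, the squared length of the Bloch vector. -/
noncomputable def blochNormSq (σ : Matrix (Fin 2) (Fin 2) ℂ) : ℝ :=
  ∑ k ∈ univ.filter (· ≠ 0), (pauli k * σ).trace.re ^ 2

lemma blochNormSq_eq {σ : Matrix (Fin 2) (Fin 2) ℂ} (hσ : σ.IsHermitian) :
    blochNormSq σ = σ.trace.re ^ 2 - 4 * σ.det.re := by
  have h10 : σ 1 0 = star (σ 0 1) := (hσ.apply 1 0).symm
  have h00 : (σ 0 0).im = 0 := Complex.conj_eq_iff_im.mp (hσ.apply 0 0)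
  have h11 : (σ 1 1).im = 0 := Complex.conj_eq_iff_im.mp (hσ.apply 1 1)
  have hX : (pauli 1 * σ).trace.re = 2 * (σ 0 1).re := by
    simp [pauli, trace, Matrix.diag, mul_apply, Fin.sum_univ_two, h10, two_mul]
  have hY : (pauli 2 * σ).trace.re = -2 * (σ 0 1).im := by
    simp [pauli, trace, Matrix.diag, mul_apply, Fin.sum_univ_two, h10, two_mul]
  have hZ : (pauli 3 * σ).trace.re = (σ 0 0).re - (σ 1 1).re := by
    simp [pauli, trace, Matrix.diag, mul_apply, Fin.sum_univ_two, sub_eq_add_neg]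
  have htr : σ.trace.re = (σ 0 0).re + (σ 1 1).re := by
    simp [trace]
  have hdet : σ.det.re = (σ 0 0).re * (σ 1 1).re - ((σ 0 1).re ^ 2 + (σ 0 1).im ^ 2) := by
    simp [det_fin_two, h10, Complex.mul_re, h00, h11, sq]
  have hnonzero : univ.filter (· ≠ (0 : Fin 4)) = {1, 2, 3} := by decide
  rw [blochNormSq, hnonzero, sum_insert (by decide), sum_insert (by decide), sum_singleton,
    hX, hY, hZ, htr, hdet]
  ring

lemma blochNormSq_le_one {σ : Matrix (Fin 2) (Fin 2) ℂ} (hσ : σ.PosSemidef)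
    (htr : σ.trace = 1) : blochNormSq σ ≤ 1 := by
  have hdet : 0 ≤ σ.det.re := (Complex.nonneg_iff.mp hσ.det_nonneg).1
  rw [blochNormSq_eq hσ.1, htr, Complex.one_re]
  linarith

lemma sector_kron2 {A : Matrix (Fin 2) (Fin 2) ℂ} (hA : A.IsHermitian)
    (B : Matrix (Fin 2) (Fin 2) ℂ) : sector 2 2 (kron2 A B) = blochNormSq A * blochNormSq B := by
  simp only [sector, trace_pWord_mul_kron2, Complex.mul_re, im_trace_pauli_mul hA, zero_mul,
    sub_zero, mul_pow]
  rw [sum_wt_eq_two (fun k l => (pauli k * A).trace.re ^ 2 * (pauli l * B).trace.re ^ 2),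
    blochNormSq, blochNormSq, Finset.sum_mul_sum]

lemma sector_kron2_le_one {A B : Matrix (Fin 2) (Fin 2) ℂ} (hA : A.PosSemidef)
    (hAtr : A.trace = 1) (hB : B.PosSemidef) (hBtr : B.trace = 1) :
    sector 2 2 (kron2 A B) ≤ 1 := by
  rw [sector_kron2 hA.1]
  exact mul_le_one₀ (blochNormSq_le_one hA hAtr) (sum_nonneg fun _ _ => sq_nonneg _)
    (blochNormSq_le_one hB hBtr)

theorem separable_A2_le_one_general (ρ : Matrix (Fin 2 → Fin 2) (Fin 2 → Fin 2) ℂ) :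
    (Separable2 ρ → sector 2 2 ρ ≤ 1) ∧ (1 < sector 2 2 ρ → ¬ Separable2 ρ) := by
  have hsep : Separable2 ρ → sector 2 2 ρ ≤ 1 := by
    rintro ⟨m, p, a, b, hp, hp1, ha, hb, rfl⟩
    simp only [Complex.coe_smul]
    calc sector 2 2 (∑ i, p i • kron2 (a i) (b i))
        ≤ ∑ i, p i • sector 2 2 (kron2 (a i) (b i)) :=
          (convexOn_sector 2 2).map_sum_le (fun i _ => hp i) hp1 fun _ _ => Set.mem_univ _
      _ ≤ ∑ i, p i • (1 : ℝ) := sum_le_sum fun i _ =>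
          smul_le_smul_of_nonneg_left (sector_kron2_le_one (ha i).1 (ha i).2 (hb i).1 (hb i).2)
            (hp i)
      _ = 1 := by simp [hp1]
  exact ⟨hsep, fun hgt hρ => (hsep hρ).not_gt hgt⟩

/-- Every separable two-qubit state satisfies `A₂(ρ) ≤ 1`; consequently,
any two-qubit state with `A₂(ρ) > 1` is entangled. -/
theorem separable_A2_le_one (ρ : Matrix (Fin 2 → Fin 2) (Fin 2 → Fin 2) ℂ)
    (hρ : IsState ρ) :
    (Separable2 ρ → sector 2 2 ρ ≤ 1) ∧ (1 < sector 2 2 ρ → ¬ Separable2 ρ) :=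
  separable_A2_le_one_general ρ
end
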